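/- arXiv:2410.13678 — 5 statements merged into one kernel-verified Lean document; each statement's English description precedes it below -/
import Mathlib

section
/- Fix μ₀ > 0 real and ω ∈ ℂ, and let ε : ℝ → ℂ satisfy ε(x) ≠ 0 for all x. Let u : ℝ → ℂ solve the Helmholtz equation on all of ℝ, with flux w := x ↦ ε(x)⁻¹·(deriv u)(x). Assume that the function x ↦ w(x)·conj(u(x)) tends to 0 as x → −∞ and as x → +∞, and that the functions x ↦ |u(x)|², x ↦ ε(x)⁻¹·(deriv u)(x)·conj((deriv u)(x)) and x ↦ (deriv w)(x)·conj(u(x)) are integrable on ℝ. Then μ₀·ω²·∫_ℝ |u(x)|² dx = ∫_ℝ ε(x)⁻¹·(deriv u)(x)·conj((deriv u)(x)) dx, as an identity of complex numbers. -/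
open MeasureTheory Filter

/-- `u` solves the Helmholtz equation `-(1/μ₀) d/dx((1/ε) du/dx) = ω² u` on the set `s`. -/
def SolvesHelmholtz (μ₀ : ℝ) (ω : ℂ) (ε : ℝ → ℂ) (u : ℝ → ℂ) (s : Set ℝ) : Prop :=
  (∀ x ∈ s, DifferentiableAt ℝ u x) ∧
  (∀ x ∈ s, DifferentiableAt ℝ (fun y => (ε y)⁻¹ * deriv u y) x) ∧
  (∀ x ∈ s, deriv (fun y => (ε y)⁻¹ * deriv u y) x = -(μ₀ : ℂ) * ω ^ 2 * u x)

/-- Energy identity on the whole line (integration by parts underlying Theorem 5.1). -/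
theorem helmholtz_energy_identity
    (μ₀ : ℝ) (hμ₀ : 0 < μ₀) (ω : ℂ) (ε : ℝ → ℂ) (hε : ∀ x, ε x ≠ 0)
    (u : ℝ → ℂ) (hu : SolvesHelmholtz μ₀ ω ε u Set.univ)
    (w : ℝ → ℂ) (hw : w = fun x => (ε x)⁻¹ * deriv u x)
    (hbot : Tendsto (fun x => w x * (starRingEnd ℂ) (u x)) atBot (nhds 0))
    (htop : Tendsto (fun x => w x * (starRingEnd ℂ) (u x)) atTop (nhds 0))
    (hint₁ : Integrable (fun x => u x * (starRingEnd ℂ) (u x)))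
    (hint₂ : Integrable (fun x => (ε x)⁻¹ * deriv u x * (starRingEnd ℂ) (deriv u x)))
    (hint₃ : Integrable (fun x => deriv w x * (starRingEnd ℂ) (u x))) :
    (μ₀ : ℂ) * ω ^ 2 * ∫ x : ℝ, u x * (starRingEnd ℂ) (u x) =
      ∫ x : ℝ, (ε x)⁻¹ * deriv u x * (starRingEnd ℂ) (deriv u x) := by
  obtain ⟨hu1, hu2, hu3⟩ := hu
  have hwd : ∀ x, HasDerivAt w (deriv w x) x := by
    intro x
    exact (hw ▸ (hu2 x trivial)).hasDerivAt
  have hvd : ∀ x, HasDerivAt (fun y => (starRingEnd ℂ) (u y)) ((starRingEnd ℂ) (deriv u x)) x :=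
    fun x => ((hu1 x trivial).hasDerivAt).star
  have key := MeasureTheory.integral_mul_deriv_eq_deriv_mul (a' := (0:ℂ)) (b' := (0:ℂ))
    (fun x _ => hwd x) (fun x _ => hvd x) ?_ ?_ ?_ ?_
  · have hL : (∫ x : ℝ, w x * (starRingEnd ℂ) (deriv u x))
        = ∫ x : ℝ, (ε x)⁻¹ * deriv u x * (starRingEnd ℂ) (deriv u x) := by
      congr 1; ext x; rw [hw]
    have hR : (∫ x : ℝ, deriv w x * (starRingEnd ℂ) (u x))
        = -(μ₀ : ℂ) * ω ^ 2 * ∫ x : ℝ, u x * (starRingEnd ℂ) (u x) := by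
      rw [← integral_const_mul]
      congr 1; ext x
      have := hu3 x trivial
      rw [hw, this]
      ring
    rw [hL, hR] at key
    rw [key]; ring
  · simpa [Pi.mul_def, hw] using hint₂
  · simpa [Pi.mul_def] using hint₃
  · simpa [Pi.mul_def] using hbot
  · simpa [Pi.mul_def] using htop
end

section
/- Fix μ₀ > 0 real and ω ∈ ℂ, and let ε : ℝ → ℝ satisfy ε(x) > 0 for all x (an undamped permittivity, regarded as complex-valued). Let u : ℝ → ℂ solve the Helmholtz equation on all of ℝ, with flux w := x ↦ ε(x)⁻¹·(deriv u)(x). Assume that x ↦ w(x)·conj(u(x)) tends to 0 as x → −∞ and as x → +∞, that the functions x ↦ |u(x)|², x ↦ ε(x)⁻¹·(deriv u)(x)·conj((deriv u)(x)) and x ↦ (deriv w)(x)·conj(u(x)) are integrable on ℝ, and that u is not identically zero. Then ω² is real and nonnegative: Im(ω²) = 0 and Re(ω²) ≥ 0. -/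
open MeasureTheory Filter

/-- Theorem 5.1: a nontrivial localised mode of an undamped system has real,
nonnegative eigenvalue ω². -/
theorem undamped_eigenvalue_real_nonneg
    (μ₀ : ℝ) (hμ₀ : 0 < μ₀) (ω : ℂ) (ε : ℝ → ℝ) (hε : ∀ x, 0 < ε x)
    (u : ℝ → ℂ) (hu : SolvesHelmholtz μ₀ ω (fun x => (ε x : ℂ)) u Set.univ)
    (w : ℝ → ℂ) (hw : w = fun x => ((ε x : ℂ))⁻¹ * deriv u x)
    (hbot : Tendsto (fun x => w x * (starRingEnd ℂ) (u x)) atBot (nhds 0))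
    (htop : Tendsto (fun x => w x * (starRingEnd ℂ) (u x)) atTop (nhds 0))
    (hint₁ : Integrable (fun x => u x * (starRingEnd ℂ) (u x)))
    (hint₂ : Integrable (fun x => ((ε x : ℂ))⁻¹ * deriv u x * (starRingEnd ℂ) (deriv u x)))
    (hint₃ : Integrable (fun x => deriv w x * (starRingEnd ℂ) (u x)))
    (hu0 : ∃ x : ℝ, u x ≠ 0) :
    (ω ^ 2).im = 0 ∧ 0 ≤ (ω ^ 2).re := by
  obtain ⟨hud, hwd, heq⟩ := hu
  -- derivative of w * conj u
  have hder : ∀ x : ℝ, HasDerivAt (fun y => w y * (starRingEnd ℂ) (u y))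
      (deriv w x * (starRingEnd ℂ) (u x) + ((ε x : ℂ))⁻¹ * deriv u x * (starRingEnd ℂ) (deriv u x)) x := by
    intro x
    have h1 : HasDerivAt w (deriv w x) x := by
      rw [hw]; exact (hwd x trivial).hasDerivAt
    have h2 : HasDerivAt (fun y => (starRingEnd ℂ) (u y)) ((starRingEnd ℂ) (deriv u x)) x :=
      (hud x trivial).hasDerivAt.star
    have hx : ((ε x : ℂ))⁻¹ * deriv u x * (starRingEnd ℂ) (deriv u x)
        = w x * (starRingEnd ℂ) (deriv u x) := by rw [hw]
    rw [hx]
    exact h1.mul h2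
  have hint' : Integrable (fun x => deriv w x * (starRingEnd ℂ) (u x) +
      ((ε x : ℂ))⁻¹ * deriv u x * (starRingEnd ℂ) (deriv u x)) := hint₃.add hint₂
  have hFTC := MeasureTheory.integral_of_hasDerivAt_of_tendsto hder hint' hbot htop
  rw [sub_zero] at hFTC
  rw [MeasureTheory.integral_add hint₃ hint₂] at hFTC
  -- rewrite deriv w using the equation
  have hderivw : ∀ x : ℝ, deriv w x * (starRingEnd ℂ) (u x)
      = -(μ₀ : ℂ) * ω ^ 2 * (u x * (starRingEnd ℂ) (u x)) := by
    intro x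
    rw [hw, heq x trivial]; ring
  have h1 : ∫ x : ℝ, deriv w x * (starRingEnd ℂ) (u x)
      = -(μ₀ : ℂ) * ω ^ 2 * ∫ x : ℝ, u x * (starRingEnd ℂ) (u x) := by
    simp_rw [hderivw]
    exact MeasureTheory.integral_const_mul _ _
  -- real forms
  set A : ℝ := ∫ x : ℝ, Complex.normSq (u x) with hA
  set B : ℝ := ∫ x : ℝ, (ε x)⁻¹ * Complex.normSq (deriv u x) with hB
  have hAc : (∫ x : ℝ, u x * (starRingEnd ℂ) (u x)) = (A : ℂ) := by
    simp_rw [Complex.mul_conj]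
    exact integral_ofReal
  have hBc : (∫ x : ℝ, ((ε x : ℂ))⁻¹ * deriv u x * (starRingEnd ℂ) (deriv u x)) = (B : ℂ) := by
    have : ∀ x : ℝ, ((ε x : ℂ))⁻¹ * deriv u x * (starRingEnd ℂ) (deriv u x)
        = (((ε x)⁻¹ * Complex.normSq (deriv u x) : ℝ) : ℂ) := by
      intro x
      rw [mul_assoc, Complex.mul_conj]
      push_cast
      ring
    simp_rw [this]
    exact integral_ofReal
  rw [h1, hAc, hBc] at hFTC
  -- integrability of normSq u
  have hintA : Integrable (fun x => Complex.normSq (u x)) := by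
    have := hint₁.re
    simpa [Complex.mul_conj] using this
  have hintB : Integrable (fun x => (ε x)⁻¹ * Complex.normSq (deriv u x)) := by
    have := hint₂.re
    have heq' : ∀ x : ℝ, (((ε x : ℂ))⁻¹ * deriv u x * (starRingEnd ℂ) (deriv u x)).re
        = (ε x)⁻¹ * Complex.normSq (deriv u x) := by
      intro x
      rw [mul_assoc, Complex.mul_conj]
      norm_cast
    simpa only [RCLike.re_to_complex, heq'] using this
  -- A > 0
  have hApos : 0 < A := by
    rcases hu0 with ⟨x₀, hx₀⟩
    have hcont : Continuous fun x => Complex.normSq (u x) :=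
      Complex.continuous_normSq.comp
        (continuous_iff_continuousAt.mpr fun x => (hud x trivial).continuousAt)
    have hnn : ∀ x : ℝ, 0 ≤ Complex.normSq (u x) := fun x => Complex.normSq_nonneg _
    rcases lt_or_eq_of_le (MeasureTheory.integral_nonneg (f := fun x => Complex.normSq (u x)) hnn) with h | h
    · exact h
    · exfalso
      have := (MeasureTheory.integral_eq_zero_iff_of_nonneg hnn hintA).mp h.symm
      have hz : (fun x => Complex.normSq (u x)) = 0 :=
        (Continuous.ae_eq_iff_eq volume hcont continuous_const).mp this
      have := congrFun hz x₀
      simp only [Pi.zero_apply, Complex.normSq_eq_zero] at this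
      exact hx₀ this
  have hBnn : 0 ≤ B :=
    MeasureTheory.integral_nonneg fun x =>
      mul_nonneg (inv_nonneg.mpr (hε x).le) (Complex.normSq_nonneg _)
  -- conclude ω² = B / (μ₀ A)
  have hω : ω ^ 2 = ((B / (μ₀ * A) : ℝ) : ℂ) := by
    have hA0 : (A : ℂ) ≠ 0 := by exact_mod_cast hApos.ne'
    have hμ0 : (μ₀ : ℂ) ≠ 0 := by exact_mod_cast hμ₀.ne'
    rw [Complex.ofReal_div, Complex.ofReal_mul, eq_div_iff (mul_ne_zero hμ0 hA0)]
    linear_combination -hFTC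
  rw [hω]
  constructor
  · exact Complex.ofReal_im _
  · rw [Complex.ofReal_re]
    positivity
end

section
/- Fix μ₀ > 0 real, ω ∈ ℂ and x₀ ∈ ℝ, and let ε : ℝ → ℝ satisfy ε(x) > 0 for all x (an undamped permittivity, regarded as complex-valued). Let u : ℝ → ℂ solve the Helmholtz equation on the half-line (−∞, x₀], with flux w := x ↦ ε(x)⁻¹·(deriv u)(x). Assume the Neumann condition (deriv u)(x₀) = 0, that x ↦ w(x)·conj(u(x)) tends to 0 as x → −∞, that the functions x ↦ |u(x)|², x ↦ ε(x)⁻¹·(deriv u)(x)·conj((deriv u)(x)) and x ↦ (deriv w)(x)·conj(u(x)) are integrable on (−∞, x₀], and that u is not identically zero on (−∞, x₀]. Then ω² is real and nonnegative: Im(ω²) = 0 and Re(ω²) ≥ 0. -/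
open MeasureTheory Filter

/-- Lemma 5.2: the undamped half-line Neumann problem with decay at -∞ admits only
real, nonnegative eigenvalues ω². -/
theorem undamped_halfline_neumann_eigenvalue_real
    (μ₀ : ℝ) (hμ₀ : 0 < μ₀) (ω : ℂ) (x₀ : ℝ) (ε : ℝ → ℝ) (hε : ∀ x, 0 < ε x)
    (u : ℝ → ℂ) (hu : SolvesHelmholtz μ₀ ω (fun x => (ε x : ℂ)) u (Set.Iic x₀))
    (w : ℝ → ℂ) (hw : w = fun x => ((ε x : ℂ))⁻¹ * deriv u x)
    (hNeu : deriv u x₀ = 0)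
    (hbot : Tendsto (fun x => w x * (starRingEnd ℂ) (u x)) atBot (nhds 0))
    (hint₁ : IntegrableOn (fun x => u x * (starRingEnd ℂ) (u x)) (Set.Iic x₀))
    (hint₂ : IntegrableOn (fun x => ((ε x : ℂ))⁻¹ * deriv u x * (starRingEnd ℂ) (deriv u x))
      (Set.Iic x₀))
    (hint₃ : IntegrableOn (fun x => deriv w x * (starRingEnd ℂ) (u x)) (Set.Iic x₀))
    (hu0 : ∃ x ∈ Set.Iic x₀, u x ≠ 0) :
    (ω ^ 2).im = 0 ∧ 0 ≤ (ω ^ 2).re := by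
  obtain ⟨hdu, hdw, heq⟩ := hu
  set c := starRingEnd ℂ with hc
  -- derivative of the product w * conj u on the half-line
  have key : ∀ x ∈ Set.Iic x₀,
      HasDerivAt (fun y => w y * c (u y))
        (deriv w x * c (u x) + w x * c (deriv u x)) x := by
    intro x hx
    have hwd : DifferentiableAt ℝ w x := by rw [hw]; exact hdw x hx
    have hconj : HasDerivAt (fun y => c (u y)) (c (deriv u x)) x := by
      exact (hdu x hx).hasDerivAt.star
    exact hwd.hasDerivAt.mul hconj
  have hint₂' : IntegrableOn (fun x => w x * c (deriv u x)) (Set.Iic x₀) := by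
    simp only [hw]; exact hint₂
  have hw0 : w x₀ = 0 := by rw [hw]; simp [hNeu]
  have hFTC : ∫ x in Set.Iic x₀, (deriv w x * c (u x) + w x * c (deriv u x)) =
      w x₀ * c (u x₀) - 0 :=
    integral_Iic_of_hasDerivAt_of_tendsto' key (hint₃.add hint₂') hbot
  have hsplit : (∫ x in Set.Iic x₀, deriv w x * c (u x)) +
      (∫ x in Set.Iic x₀, w x * c (deriv u x)) = 0 := by
    rw [← integral_add hint₃ hint₂']
    rw [hFTC, hw0, zero_mul, sub_zero]
  -- the first integral via the Helmholtz equation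
  have hL : ∫ x in Set.Iic x₀, deriv w x * c (u x)
      = -(μ₀ : ℂ) * ω ^ 2 * ∫ x in Set.Iic x₀, u x * c (u x) := by
    rw [← integral_const_mul]
    refine setIntegral_congr_fun measurableSet_Iic fun x hx => ?_
    have : deriv w x = -(μ₀ : ℂ) * ω ^ 2 * u x := by rw [hw]; exact heq x hx
    rw [this]; ring
  -- real forms of the two integrals
  set a : ℝ := ∫ x in Set.Iic x₀, Complex.normSq (u x) with ha
  set b : ℝ := ∫ x in Set.Iic x₀, (ε x)⁻¹ * Complex.normSq (deriv u x) with hb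
  have hA : ∫ x in Set.Iic x₀, u x * c (u x) = (a : ℂ) := by
    rw [ha]; simp_rw [hc, Complex.mul_conj]; exact integral_ofReal
  have hB : ∫ x in Set.Iic x₀, w x * c (deriv u x) = (b : ℂ) := by
    rw [hb, hw]
    simp_rw [hc, mul_assoc, Complex.mul_conj, ← Complex.ofReal_inv, ← Complex.ofReal_mul]
    exact integral_ofReal
  have h : (μ₀ : ℂ) * ω ^ 2 * (a : ℂ) = (b : ℂ) := by
    rw [hL, hA, hB] at hsplit
    linear_combination -hsplit
  -- positivity of a
  have hAint : IntegrableOn (fun x => Complex.normSq (u x)) (Set.Iic x₀) := by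
    refine hint₁.re.congr (Filter.Eventually.of_forall fun x => ?_)
    simp only [hc, RCLike.re_to_complex, Complex.mul_re, Complex.conj_re, Complex.conj_im,
      Complex.normSq_apply]
    ring
  have hApos : 0 < a := by
    rw [ha, setIntegral_pos_iff_support_of_nonneg_ae
      (Filter.Eventually.of_forall fun x => Complex.normSq_nonneg _) hAint]
    obtain ⟨x, hx, hx0⟩ := hu0
    have hcont : ContinuousAt u x := (hdu x hx).continuousAt
    obtain ⟨δ, hδ, hδ'⟩ := Metric.eventually_nhds_iff.mp (hcont.eventually_ne hx0)
    have hsub : Set.Ioo (x - δ) x ⊆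
        Function.support (fun y => Complex.normSq (u y)) ∩ Set.Iic x₀ := by
      intro y hy
      refine ⟨?_, le_trans hy.2.le hx⟩
      simp only [Function.mem_support, ne_eq, Complex.normSq_eq_zero]
      exact hδ' (by rw [Real.dist_eq, abs_lt]; constructor <;> linarith [hy.1, hy.2])
    calc (0 : ENNReal) < ENNReal.ofReal δ := by simpa using hδ
      _ = volume (Set.Ioo (x - δ) x) := by rw [Real.volume_Ioo]; ring_nf
      _ ≤ _ := measure_mono hsub
  have hBnn : 0 ≤ b :=
    setIntegral_nonneg measurableSet_Iic fun x _ =>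
      mul_nonneg (inv_nonneg.mpr (hε x).le) (Complex.normSq_nonneg _)
  -- conclude
  have hμa : (0 : ℝ) < μ₀ * a := mul_pos hμ₀ hApos
  have h2 : ((μ₀ * a : ℝ) : ℂ) ≠ 0 := by exact_mod_cast hμa.ne'
  have hω : ω ^ 2 = ((b / (μ₀ * a) : ℝ) : ℂ) := by
    rw [Complex.ofReal_div, eq_div_iff h2]
    push_cast
    linear_combination h
  rw [hω]
  exact ⟨Complex.ofReal_im _, by rw [Complex.ofReal_re]; exact div_nonneg hBnn hμa.le⟩
end

section
/- Let T be a 2×2 complex matrix and λ₁, λ₂ ∈ ℂ with trace T = λ₁ + λ₂, det T = λ₁·λ₂, |λ₁| < 1 and |λ₂| > 1. Then for every vector x ∈ ℂ², the sequence n ↦ Tⁿ·x (matrix powers applied to x) tends to 0 as n → ∞ if and only if T·x = λ₁·x. -/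
open Filter Matrix

private lemma pow_mulVec_eig (T : Matrix (Fin 2) (Fin 2) ℂ) (lam : ℂ) (u : Fin 2 → ℂ)
    (h : T *ᵥ u = lam • u) : ∀ n : ℕ, (T ^ n) *ᵥ u = lam ^ n • u := by
  intro n
  induction n with
  | zero => simp
  | succ n ih =>
      rw [pow_succ', ← Matrix.mulVec_mulVec, ih, Matrix.mulVec_smul, h, smul_smul, ← pow_succ]

/-- Dichotomy for hyperbolic 2×2 matrices: iterates of a vector tend to 0 iff the vector
lies in the contracting eigenspace. -/
theorem decay_iff_contracting_eigenvector
    (T : Matrix (Fin 2) (Fin 2) ℂ) (lam₁ lam₂ : ℂ)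
    (htr : T.trace = lam₁ + lam₂) (hdet : T.det = lam₁ * lam₂)
    (h1 : ‖lam₁‖ < 1) (h2 : ‖lam₂‖ > 1)
    (x : Fin 2 → ℂ) :
    Tendsto (fun n : ℕ => (T ^ n) *ᵥ x) atTop (nhds 0) ↔ T *ᵥ x = lam₁ • x := by
  rw [Matrix.trace_fin_two] at htr
  rw [Matrix.det_fin_two] at hdet
  -- Cayley--Hamilton at the vector level
  have hCH : T *ᵥ (T *ᵥ x) = (lam₁ + lam₂) • (T *ᵥ x) - (lam₁ * lam₂) • x := by
    funext i
    fin_cases i <;>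
      simp [Matrix.mulVec, dotProduct, Fin.sum_univ_two]
    · linear_combination (T 0 0 * x 0 + T 0 1 * x 1) * htr - x 0 * hdet
    · linear_combination (T 1 0 * x 0 + T 1 1 * x 1) * htr - x 1 * hdet
  set u : Fin 2 → ℂ := T *ᵥ x - lam₂ • x with hu
  set v : Fin 2 → ℂ := T *ᵥ x - lam₁ • x with hv
  have hne : lam₂ - lam₁ ≠ 0 := by
    intro h
    have : lam₂ = lam₁ := by linear_combination h
    rw [this] at h2; linarith
  have hTu : T *ᵥ u = lam₁ • u := by
    rw [hu, Matrix.mulVec_sub, Matrix.mulVec_smul, hCH]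
    funext i; simp [Pi.smul_apply, Pi.sub_apply, -Matrix.mulVec_fin_two]; ring
  have hTv : T *ᵥ v = lam₂ • v := by
    rw [hv, Matrix.mulVec_sub, Matrix.mulVec_smul, hCH]
    funext i; simp [Pi.smul_apply, Pi.sub_apply, -Matrix.mulVec_fin_two]; ring
  have hx : ∀ n : ℕ, (T ^ n) *ᵥ x = (lam₂ - lam₁)⁻¹ • (lam₂ ^ n • v - lam₁ ^ n • u) := by
    intro n
    have hvu : v - u = (lam₂ - lam₁) • x := by
      funext i; simp [hu, hv, Pi.smul_apply, Pi.sub_apply, -Matrix.mulVec_fin_two]; ring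
    have : (T ^ n) *ᵥ (v - u) = lam₂ ^ n • v - lam₁ ^ n • u := by
      rw [Matrix.mulVec_sub, pow_mulVec_eig T lam₁ u hTu, pow_mulVec_eig T lam₂ v hTv]
    rw [hvu, Matrix.mulVec_smul] at this
    rw [← this, smul_smul, inv_mul_cancel₀ hne, one_smul]
  have habs1 : ‖lam₁‖ < 1 := h1
  constructor
  · intro h
    -- then lam₂ ^ n • v → 0, forcing v = 0
    have hu0 : Tendsto (fun n : ℕ => lam₁ ^ n • u) atTop (nhds 0) := by
      have := (tendsto_pow_atTop_nhds_zero_of_norm_lt_one habs1).smul_const u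
      simpa using this
    have hv0 : Tendsto (fun n : ℕ => lam₂ ^ n • v) atTop (nhds 0) := by
      have h' : Tendsto (fun n : ℕ => (lam₂ - lam₁) • ((T ^ n) *ᵥ x) + lam₁ ^ n • u)
          atTop (nhds 0) := by
        have := (h.const_smul (lam₂ - lam₁)).add hu0
        simpa using this
      have : (fun n : ℕ => lam₂ ^ n • v)
          = fun n : ℕ => (lam₂ - lam₁) • ((T ^ n) *ᵥ x) + lam₁ ^ n • u := by
        funext n
        rw [hx n, smul_smul, mul_inv_cancel₀ hne, one_smul]
        abel
      rw [this]; exact h'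
    have hveq : v = 0 := by
      funext i
      by_contra hvi
      have hcomp : Tendsto (fun n : ℕ => lam₂ ^ n * v i) atTop (nhds 0) := by
        have := hv0.comp (tendsto_id (α := ℕ))
        have h3 : Tendsto (fun n : ℕ => (lam₂ ^ n • v) i) atTop (nhds (0 : ℂ)) :=
          ((continuous_apply i).tendsto _).comp hv0
        simpa using h3
      have hnorm : Tendsto (fun n : ℕ => ‖lam₂ ^ n * v i‖) atTop (nhds 0) := by
        simpa using hcomp.norm
      have hge : ∀ n : ℕ, ‖v i‖ ≤ ‖lam₂ ^ n * v i‖ := by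
        intro n
        rw [norm_mul, norm_pow]
        have h1n : (1 : ℝ) ≤ ‖lam₂‖ ^ n := one_le_pow₀ (le_of_lt h2)
        nlinarith [norm_nonneg (v i), norm_pos_iff.mpr hvi]
      have : ‖v i‖ ≤ 0 := ge_of_tendsto hnorm (Filter.Eventually.of_forall hge)
      exact hvi (norm_le_zero_iff.mp this)
    have : T *ᵥ x - lam₁ • x = 0 := hveq
    funext i
    have := congrFun this i
    simpa [sub_eq_zero] using this
  · intro h
    have hxn : ∀ n : ℕ, (T ^ n) *ᵥ x = lam₁ ^ n • x := pow_mulVec_eig T lam₁ x h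
    have : Tendsto (fun n : ℕ => lam₁ ^ n • x) atTop (nhds 0) := by
      have := (tendsto_pow_atTop_nhds_zero_of_norm_lt_one habs1).smul_const x
      simpa using this
    rw [funext hxn]; exact this
end

section
/- Let A, B be 2×2 complex matrices; let α₁, α₂, β₁, β₂ ∈ ℂ with trace A = α₁ + α₂, det A = α₁·α₂, |α₁| < 1 < |α₂|, trace B = β₁ + β₂, det B = β₁·β₂, |β₁| < 1 < |β₂|. Let v_A, v_B ∈ ℂ² be nonzero vectors with A·v_A = α₁·v_A and B·v_B = β₁·v_B, and let S be the 2×2 diagonal matrix with diagonal entries 1 and −1. Then the following are equivalent: (i) there exists a sequence x : ℤ → ℂ², not identically zero, such that x(n+1) = B·x(n) for all n ≥ 0, x(n−1) = (S·A·S)·x(n) for all n ≤ 0, and x(n) → 0 both as n → +∞ and as n → −∞; (ii) v_A(0)·v_B(1) + v_A(1)·v_B(0) = 0 (writing v(0), v(1) for the two components of a vector v ∈ ℂ²). -/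
open Filter Matrix

lemma cayley_vec (M : Matrix (Fin 2) (Fin 2) ℂ) (l₁ l₂ : ℂ)
    (htr : M.trace = l₁ + l₂) (hdet : M.det = l₁ * l₂) (y : Fin 2 → ℂ) :
    M *ᵥ (M *ᵥ y - l₁ • y) = l₂ • (M *ᵥ y - l₁ • y) := by
  rw [Matrix.trace_fin_two] at htr
  rw [Matrix.det_fin_two] at hdet
  funext i
  fin_cases i <;>
    simp [Matrix.mulVec, dotProduct, Fin.sum_univ_two, mul_sub, Matrix.vecHead, Matrix.vecTail]
  · linear_combination (y 0 * M 0 0 + y 1 * M 0 1) * htr - y 0 * hdet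
  · linear_combination (y 0 * M 1 0 + y 1 * M 1 1) * htr - y 1 * hdet

lemma eig_parallel (M : Matrix (Fin 2) (Fin 2) ℂ) (l₁ l₂ : ℂ)
    (htr : M.trace = l₁ + l₂) (hne : l₁ ≠ l₂) (y w : Fin 2 → ℂ)
    (hy : M *ᵥ y = l₁ • y) (hw : M *ᵥ w = l₁ • w) :
    y 0 * w 1 - y 1 * w 0 = 0 := by
  rw [Matrix.trace_fin_two] at htr
  have hy0 := congrFun hy 0
  have hy1 := congrFun hy 1
  have hw0 := congrFun hw 0
  have hw1 := congrFun hw 1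
  simp [Matrix.mulVec, dotProduct, Fin.sum_univ_two] at hy0 hy1 hw0 hw1
  by_contra hc
  have h1 : (M 0 0 - l₁) * (y 0 * w 1 - y 1 * w 0) = 0 := by
    linear_combination w 1 * hy0 - y 1 * hw0
  have h2 : (M 1 1 - l₁) * (y 0 * w 1 - y 1 * w 0) = 0 := by
    linear_combination y 0 * hw1 - w 0 * hy1
  have e1 : M 0 0 = l₁ := by
    rcases mul_eq_zero.mp h1 with h | h
    · exact sub_eq_zero.mp h
    · exact absurd h hc
  have e2 : M 1 1 = l₁ := by
    rcases mul_eq_zero.mp h2 with h | h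
    · exact sub_eq_zero.mp h
    · exact absurd h hc
  rw [e1, e2] at htr
  exact hne (add_left_cancel htr)

/-- Decay of the orbit forces the initial vector into the contracting eigenspace. -/
lemma decay_eig (M : Matrix (Fin 2) (Fin 2) ℂ) (l₁ l₂ : ℂ)
    (htr : M.trace = l₁ + l₂) (hdet : M.det = l₁ * l₂) (hl₂ : 1 < ‖l₂‖)
    (z : ℕ → Fin 2 → ℂ) (hrec : ∀ n, z (n + 1) = M *ᵥ z n)
    (hz : Tendsto z atTop (nhds 0)) : M *ᵥ z 0 = l₁ • z 0 := by
  set u : ℕ → Fin 2 → ℂ := fun n => z (n + 1) - l₁ • z n with hu_def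
  have hu : ∀ n, u n = l₂ ^ n • u 0 := by
    intro n
    induction n with
    | zero => simp
    | succ n ih =>
      have : u (n + 1) = M *ᵥ u n := by
        simp only [hu_def, hrec (n+1), hrec n, Matrix.mulVec_sub, Matrix.mulVec_smul]
      rw [this, ih, Matrix.mulVec_smul]
      have : M *ᵥ u 0 = l₂ • u 0 := by
        have := cayley_vec M l₁ l₂ htr hdet (z 0)
        simpa [hu_def, hrec 0] using this
      rw [this, smul_smul, ← pow_succ]
  have hu_tend : Tendsto u atTop (nhds 0) := by
    have h1 : Tendsto (fun n => z (n + 1)) atTop (nhds (0 : Fin 2 → ℂ)) :=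
      hz.comp (tendsto_add_atTop_nat 1)
    have h2 : Tendsto (fun n => l₁ • z n) atTop (nhds (0 : Fin 2 → ℂ)) := by
      simpa using hz.const_smul l₁
    simpa using h1.sub h2
  have hu0 : u 0 = 0 := by
    by_contra h
    obtain ⟨i, hi⟩ := Function.ne_iff.mp h
    have hci : Tendsto (fun n => l₂ ^ n * u 0 i) atTop (nhds 0) := by
      have := tendsto_pi_nhds.mp hu_tend i
      refine this.congr fun n => ?_
      rw [hu n]; simp
    have hnorm : Tendsto (fun n => ‖l₂ ^ n * u 0 i‖) atTop (nhds 0) := by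
      simpa using hci.norm
    have hipos : (0:ℝ) < ‖u 0 i‖ := norm_pos_iff.mpr (by simpa using hi)
    have hev := hnorm.eventually_lt_const hipos
    obtain ⟨n, hn⟩ := hev.exists
    have : ‖u 0 i‖ ≤ ‖l₂ ^ n * u 0 i‖ := by
      rw [norm_mul, norm_pow]
      have h1 : (1:ℝ) ≤ ‖l₂‖ ^ n := one_le_pow₀ (by linarith)
      nlinarith [norm_nonneg (u 0 i)]
    linarith
  have h0 : z 1 = l₁ • z 0 := by
    have := hu0
    simp only [hu_def] at this
    exact sub_eq_zero.mp this
  rw [← hrec 0]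
  exact h0

/-- If b is parallel to an eigenvector a ≠ 0, then b is an eigenvector. -/
lemma prop_eig (M : Matrix (Fin 2) (Fin 2) ℂ) (l : ℂ) (a b : Fin 2 → ℂ)
    (h : M *ᵥ a = l • a) (hpar : a 0 * b 1 - a 1 * b 0 = 0) (ha : a ≠ 0) :
    M *ᵥ b = l • b := by
  obtain ⟨i, hi⟩ := Function.ne_iff.mp ha
  have key : ∀ c : ℂ, b = c • a → M *ᵥ b = l • b := by
    rintro c rfl
    rw [Matrix.mulVec_smul, h, smul_smul, smul_smul, mul_comm]
  fin_cases i
  · have h0 : a 0 ≠ 0 := by simpa using hi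
    refine key (b 0 / a 0) ?_
    funext j
    fin_cases j
    · simp only [Pi.smul_apply, smul_eq_mul, Fin.zero_eta, Fin.mk_one]
      field_simp
    · simp only [Pi.smul_apply, smul_eq_mul, Fin.zero_eta, Fin.mk_one]
      field_simp
      linear_combination hpar
  · have h1 : a 1 ≠ 0 := by simpa using hi
    refine key (b 1 / a 1) ?_
    funext j
    fin_cases j
    · simp only [Pi.smul_apply, smul_eq_mul, Fin.zero_eta, Fin.mk_one]
      field_simp
      linear_combination -hpar
    · simp only [Pi.smul_apply, smul_eq_mul, Fin.zero_eta, Fin.mk_one]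
      field_simp

/-- Theorem 7.3: existence of a localised interface mode is equivalent to the eigenvector
condition V₁₁^(A) V₂₁^(B) + V₁₁^(B) V₂₁^(A) = 0. -/
theorem interface_mode_eigenvector_condition
    (A B : Matrix (Fin 2) (Fin 2) ℂ) (α₁ α₂ β₁ β₂ : ℂ)
    (htrA : A.trace = α₁ + α₂) (hdetA : A.det = α₁ * α₂)
    (hα₁ : ‖α₁‖ < 1) (hα₂ : 1 < ‖α₂‖)
    (htrB : B.trace = β₁ + β₂) (hdetB : B.det = β₁ * β₂)
    (hβ₁ : ‖β₁‖ < 1) (hβ₂ : 1 < ‖β₂‖)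
    (vA vB : Fin 2 → ℂ) (hvA0 : vA ≠ 0) (hvB0 : vB ≠ 0)
    (hvA : A *ᵥ vA = α₁ • vA) (hvB : B *ᵥ vB = β₁ • vB)
    (S : Matrix (Fin 2) (Fin 2) ℂ) (hS : S = Matrix.diagonal ![1, -1]) :
    (∃ x : ℤ → Fin 2 → ℂ,
        (∃ n : ℤ, x n ≠ 0) ∧
        (∀ n : ℤ, 0 ≤ n → x (n + 1) = B *ᵥ x n) ∧
        (∀ n : ℤ, n ≤ 0 → x (n - 1) = (S * A * S) *ᵥ x n) ∧
        Tendsto x atTop (nhds 0) ∧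
        Tendsto x atBot (nhds 0)) ↔
      vA 0 * vB 1 + vA 1 * vB 0 = 0 := by
  -- basic facts about S and M := S * A * S
  have hSS : S * S = 1 := by
    subst hS
    ext i j
    fin_cases i <;> fin_cases j <;>
      simp [Matrix.mul_apply, Fin.sum_univ_two, Matrix.one_apply]
  set M : Matrix (Fin 2) (Fin 2) ℂ := S * A * S with hM
  have htrM : M.trace = α₁ + α₂ := by
    rw [hM, Matrix.trace_mul_comm (S * A) S, ← Matrix.mul_assoc, Matrix.trace_mul_comm (S * S) A,
      hSS, Matrix.mul_one]
    exact htrA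
  have hdetM : M.det = α₁ * α₂ := by
    rw [hM, Matrix.det_mul, Matrix.det_mul]
    have h1 : S.det * S.det = 1 := by
      rw [← Matrix.det_mul, hSS, Matrix.det_one]
    calc S.det * A.det * S.det = S.det * S.det * A.det := by ring
    _ = α₁ * α₂ := by rw [h1, one_mul, hdetA]
  -- the "mirrored" eigenvector
  set a : Fin 2 → ℂ := S *ᵥ vA with ha_def
  have ha0 : a 0 = vA 0 := by simp [ha_def, hS, Matrix.mulVec_diagonal]
  have ha1 : a 1 = -vA 1 := by simp [ha_def, hS, Matrix.mulVec_diagonal]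
  have hMa : M *ᵥ a = α₁ • a := by
    have h4 : S *ᵥ (S *ᵥ vA) = vA := by
      rw [Matrix.mulVec_mulVec, hSS, Matrix.one_mulVec]
    rw [hM, ha_def, ← Matrix.mulVec_mulVec, ← Matrix.mulVec_mulVec, h4, hvA, Matrix.mulVec_smul]
  have ha_ne : a ≠ 0 := by
    intro h
    apply hvA0
    funext i
    have h0 := congrFun h 0
    have h1 := congrFun h 1
    rw [ha0] at h0
    rw [ha1] at h1
    fin_cases i
    · simpa using h0
    · simpa using h1
  have hαne : α₁ ≠ α₂ := by
    intro h; rw [h] at hα₁; linarith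
  have hβne : β₁ ≠ β₂ := by
    intro h; rw [h] at hβ₁; linarith
  constructor
  · -- forward direction
    rintro ⟨x, ⟨n₀, hn₀⟩, hBrec, hArec, htop, hbot⟩
    -- right half-orbit
    have hBrecN : ∀ n : ℕ, x (n + 1 : ℕ) = B *ᵥ x n := by
      intro n
      have := hBrec n (Int.natCast_nonneg n)
      push_cast
      exact_mod_cast this
    have htopN : Tendsto (fun n : ℕ => x n) atTop (nhds 0) :=
      htop.comp tendsto_natCast_atTop_atTop
    have hBx0 : B *ᵥ x 0 = β₁ • x 0 :=
      decay_eig B β₁ β₂ htrB hdetB hβ₂ (fun n : ℕ => x n) hBrecN htopN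
    -- left half-orbit
    have hArecN : ∀ n : ℕ, x (-(n + 1 : ℕ)) = M *ᵥ x (-n) := by
      intro n
      have := hArec (-n) (by omega)
      push_cast
      convert this using 2
      omega
    have hbotN : Tendsto (fun n : ℕ => x (-n)) atTop (nhds 0) := by
      refine hbot.comp ?_
      refine Filter.tendsto_atTop_atBot.2 fun b => ⟨(-b).toNat, fun n hn => by omega⟩
    have hMx0 : M *ᵥ x 0 = α₁ • x 0 := by
      have := decay_eig M α₁ α₂ htrM hdetM hα₂ (fun n : ℕ => x (-n)) hArecN hbotN
      simpa using this
    -- x 0 ≠ 0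
    have hx0 : x 0 ≠ 0 := by
      intro h
      apply hn₀
      have hpos : ∀ k : ℕ, x k = 0 := by
        intro k
        induction k with
        | zero => exact_mod_cast h
        | succ k ih => rw [hBrecN k, ih, Matrix.mulVec_zero]
      have hneg : ∀ k : ℕ, x (-k) = 0 := by
        intro k
        induction k with
        | zero => exact_mod_cast h
        | succ k ih => rw [hArecN k, ih, Matrix.mulVec_zero]
      rcases Int.eq_nat_or_neg n₀ with ⟨k, rfl | rfl⟩
      · exact hpos k
      · exact hneg k
    -- parallelism
    have h1 : x 0 0 * vB 1 - x 0 1 * vB 0 = 0 :=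
      eig_parallel B β₁ β₂ htrB hβne (x 0) vB hBx0 hvB
    have h2 : x 0 0 * a 1 - x 0 1 * a 0 = 0 :=
      eig_parallel M α₁ α₂ htrM hαne (x 0) a hMx0 hMa
    rw [ha0, ha1] at h2
    obtain ⟨i, hi⟩ := Function.ne_iff.mp hx0
    fin_cases i
    · have hp : x 0 0 ≠ 0 := by simpa using hi
      have key : x 0 0 * (vA 0 * vB 1 + vA 1 * vB 0) = 0 := by
        linear_combination vA 0 * h1 - vB 0 * h2
      rcases mul_eq_zero.mp key with h | h
      · exact absurd h hp
      · exact h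
    · have hq : x 0 1 ≠ 0 := by simpa using hi
      have key : x 0 1 * (vA 0 * vB 1 + vA 1 * vB 0) = 0 := by
        linear_combination (-vA 1) * h1 - vB 1 * h2
      rcases mul_eq_zero.mp key with h | h
      · exact absurd h hq
      · exact h
  · -- reverse direction
    intro hcond
    have hMvB : M *ᵥ vB = α₁ • vB := by
      refine prop_eig M α₁ a vB hMa ?_ ha_ne
      rw [ha0, ha1]
      linear_combination hcond
    refine ⟨fun n => if 0 ≤ n then β₁ ^ n.toNat • vB else α₁ ^ (-n).toNat • vB, ⟨0, ?_⟩, ?_, ?_, ?_, ?_⟩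
    · simpa using hvB0
    · intro n hn
      have h1 : (0:ℤ) ≤ n + 1 := by omega
      have h2 : (n + 1).toNat = n.toNat + 1 := by omega
      simp only [if_pos hn, if_pos h1, h2, Matrix.mulVec_smul, hvB, pow_succ, smul_smul]
    · intro n hn
      have h1 : ¬ (0:ℤ) ≤ n - 1 := by omega
      have h2 : (-(n - 1)).toNat = (-n).toNat + 1 := by omega
      rcases eq_or_lt_of_le hn with h | h
      · subst h
        simp only [if_neg h1, if_pos le_rfl, h2, Matrix.mulVec_smul, hMvB, pow_succ, smul_smul,
          pow_zero, one_smul]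
        norm_num
      · have h3 : ¬ (0:ℤ) ≤ n := by omega
        simp only [if_neg h1, if_neg h3, h2, Matrix.mulVec_smul, hMvB, pow_succ, smul_smul]
    · -- tendsto atTop
      have hbase : Tendsto (fun k : ℕ => β₁ ^ k • vB) atTop (nhds 0) := by
        have := tendsto_pow_atTop_nhds_zero_of_norm_lt_one
          (by exact hβ₁)
        simpa using this.smul_const vB
      have htn : Tendsto (fun n : ℤ => n.toNat) atTop atTop :=
        Filter.tendsto_atTop_atTop.2 fun b => ⟨(b : ℤ), fun n hn => by omega⟩
      refine (hbase.comp htn).congr' ?_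
      filter_upwards [Filter.eventually_ge_atTop (0 : ℤ)] with n hn
      simp [hn]
    · -- tendsto atBot
      have hbase : Tendsto (fun k : ℕ => α₁ ^ k • vB) atTop (nhds 0) := by
        have := tendsto_pow_atTop_nhds_zero_of_norm_lt_one
          (by exact hα₁)
        simpa using this.smul_const vB
      have htn : Tendsto (fun n : ℤ => (-n).toNat) atBot atTop :=
        Filter.tendsto_atBot_atTop.2 fun b => ⟨-(b : ℤ), fun n hn => by omega⟩
      refine (hbase.comp htn).congr' ?_
      filter_upwards [Filter.eventually_le_atBot (-1 : ℤ)] with n hn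
      have : ¬ (0:ℤ) ≤ n := by omega
      simp [this]
end
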